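/- Let t_1 ≥ t_2 ≥ ⋯ ≥ t_k ≥ 0, let N, α ∈ ℤ_{≥0} with α ≤ N, and let 1 ≤ m ≤ min(k, N). Set c = ⌊N/m⌋ ≥ 1, d = N − c·m (so 0 ≤ d < m), and define the even assignment x by x_i = c + 1 for 1 ≤ i ≤ d, x_i = c for d < i ≤ m, and x_i = 0 for m < i ≤ k. With prefix sums U_j = Σ_{i=1}^j t_i (U_0 = 0), the worst-case profit of x equals min over integers r with 0 ≤ r ≤ min(d, ⌊α/(c+1)⌋) of (U_d − U_r) + (U_m − U_{d + s(r)}), where s(r) = min(m − d, ⌊(α − r(c+1))/c⌋). -/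

import Mathlib

/-!
An attack on the even assignment only matters through the tasks it empties: emptying one of the
first `d` tasks costs `c + 1` agents, emptying one of the next `m - d` costs `c`. If it empties `r`
tasks of the first block and `s` of the second, the damage is largest when these are the most
valuable tasks of each block, since `t` is antitone, so the surviving profit is at least
`(U_d - U_r) + (U_m - U_{d+s})`; the attacker then takes `s` as large as the budget allows, and
this bound is attained by emptying exactly those tasks.
-/

/-- Shifted Heaviside function `H(n) = min(1, n)`, as a real number. -/
noncomputable def H (n : ℕ) : ℝ := min 1 (n : ℝ)

/-- The worst-case profit `g(x) = min_{δ ∈ Δ_α(x)} Σ_i t_i · H(x_i − δ_i)`. -/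
noncomputable def worstProfit {k : ℕ} (t : Fin k → ℝ) (α : ℕ) (x : Fin k → ℕ) : ℝ :=
  ((Finset.Icc 0 x).filter (fun δ => ∑ i, δ i ≤ α)).inf'
    ⟨0, Finset.mem_filter.mpr ⟨Finset.mem_Icc.mpr ⟨le_rfl, fun i => Nat.zero_le _⟩, by simp⟩⟩
    (fun δ => ∑ i, t i * H (x i - δ i))

open Finset

theorem Finset.sum_le_sum_of_card_eq_of_forall_le {ι M : Type*} [AddCommMonoid M] [LinearOrder M]
    [IsOrderedAddMonoid M] {s t : Finset ι} {f : ι → M} (hst : #s = #t)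
    (h : ∀ i ∈ s, ∀ j ∈ t, f i ≤ f j) : ∑ i ∈ s, f i ≤ ∑ j ∈ t, f j := by
  obtain rfl | hs := s.eq_empty_or_nonempty
  · rw [card_empty, eq_comm, card_eq_zero] at hst
    simp [hst]
  calc ∑ i ∈ s, f i ≤ #s • s.sup' hs f := sum_le_card_nsmul s f _ fun i hi => le_sup' f hi
    _ ≤ ∑ j ∈ t, f j :=
      hst ▸ card_nsmul_le_sum t f _ fun j hj => sup'_le hs f fun i hi => h i hi j hj

section

variable {k : ℕ}

def finIco (k a b : ℕ) : Finset (Fin k) := {i | a ≤ (i : ℕ) ∧ (i : ℕ) < b}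

@[simp]
lemma mem_finIco {a b : ℕ} {i : Fin k} : i ∈ finIco k a b ↔ a ≤ (i : ℕ) ∧ (i : ℕ) < b := by
  simp [finIco]

lemma card_finIco (a b : ℕ) : #(finIco k a b) = min b k - a := by
  rw [← Nat.card_Ico, ← card_image_of_injective _ Fin.val_injective]
  congr 1
  ext n
  simp only [mem_image, mem_finIco, mem_Ico]
  exact ⟨fun ⟨i, hi, hin⟩ => hin ▸ ⟨hi.1, lt_min hi.2 i.isLt⟩,
    fun hn => ⟨⟨n, by omega⟩, ⟨hn.1, hn.2.trans_le (min_le_left _ _)⟩, rfl⟩⟩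

lemma disjoint_finIco {a b c e : ℕ} (hbc : b ≤ c) : Disjoint (finIco k a b) (finIco k c e) :=
  disjoint_left.2 fun i h₁ h₂ => by
    simp only [mem_finIco] at h₁ h₂
    omega

lemma sum_finIco_consecutive {M : Type*} [AddCommMonoid M] (f : Fin k → M) {a b c : ℕ}
    (hab : a ≤ b) (hbc : b ≤ c) :
    ∑ i ∈ finIco k a b, f i + ∑ i ∈ finIco k b c, f i = ∑ i ∈ finIco k a c, f i := by
  rw [← sum_union (disjoint_finIco le_rfl)]
  congr 1
  ext i
  simp only [mem_union, mem_finIco]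
  omega

lemma sum_finIco_le_sum_finIco_of_le {M : Type*} [AddCommMonoid M] [PartialOrder M]
    [IsOrderedAddMonoid M] {f : Fin k → M} (hf : ∀ i, 0 ≤ f i) {a a' b : ℕ} (ha : a ≤ a') :
    ∑ i ∈ finIco k a' b, f i ≤ ∑ i ∈ finIco k a b, f i :=
  sum_le_sum_of_subset_of_nonneg (fun i hi => by simp only [mem_finIco] at hi ⊢; omega)
    fun i _ _ => hf i

lemma sum_val_lt_sub_sum_val_lt {M : Type*} [AddCommGroup M] (f : Fin k → M) {a b : ℕ}
    (hab : a ≤ b) :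
    ∑ i ∈ univ.filter (fun i : Fin k => (i : ℕ) < b), f i -
      ∑ i ∈ univ.filter (fun i : Fin k => (i : ℕ) < a), f i = ∑ i ∈ finIco k a b, f i := by
  have hfin : ∀ j, ∑ i ∈ univ.filter (fun i : Fin k => (i : ℕ) < j), f i =
      ∑ i ∈ finIco k 0 j, f i := fun j => by
    simp [finIco]
  rw [hfin, hfin, ← sum_finIco_consecutive f (Nat.zero_le a) hab, add_sub_cancel_left]

theorem sum_le_sum_finIco_of_antitone {M : Type*} [AddCommMonoid M] [LinearOrder M]
    [IsOrderedAddMonoid M] {t : Fin k → M} (ht : Antitone t) {A : Finset (Fin k)} {lo : ℕ}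
    (hA : ∀ i ∈ A, lo ≤ (i : ℕ)) : ∑ i ∈ A, t i ≤ ∑ i ∈ finIco k lo (lo + #A), t i := by
  set I := finIco k lo (lo + #A)
  have hAk : #A ≤ min k k - lo := by
    rw [← card_finIco]
    exact card_le_card fun i hi => mem_finIco.2 ⟨hA i hi, i.isLt⟩
  have hcard : #A = #I := by
    rw [card_finIco]
    omega
  -- `A \ I` and `I \ A` have the same size, and every index in `A \ I` exceeds every one in `I \ A`
  rw [← sum_inter_add_sum_sdiff A I, ← sum_inter_add_sum_sdiff I A, inter_comm]
  refine add_le_add le_rfl <|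
    sum_le_sum_of_card_eq_of_forall_le (card_sdiff_comm hcard) fun i hi j hj => ht ?_
  simp only [I, mem_sdiff, mem_finIco] at hi hj
  have := hA i hi.1
  exact Fin.le_def.2 (by omega)

theorem sum_finIco_le_sum_sdiff {M : Type*} [AddCommGroup M] [LinearOrder M]
    [IsOrderedAddMonoid M] {t : Fin k → M} (ht : Antitone t) {K : Finset (Fin k)} {lo hi : ℕ}
    (hlo : lo ≤ hi) (hK : K ⊆ finIco k lo hi) :
    ∑ i ∈ finIco k (lo + #K) hi, t i ≤ ∑ i ∈ finIco k lo hi \ K, t i := by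
  have hKcard : #K ≤ hi - lo := (card_le_card hK).trans (by rw [card_finIco]; omega)
  rw [sum_sdiff_eq_sub hK, ← sum_finIco_consecutive t (Nat.le_add_right lo #K) (by omega),
    add_sub_right_comm, le_add_iff_nonneg_left, sub_nonneg]
  exact sum_le_sum_finIco_of_antitone ht fun i hi => (mem_finIco.1 (hK hi)).1

lemma H_eq_ite (n : ℕ) : H n = if n = 0 then 0 else 1 := by
  unfold H
  split_ifs with hn
  · simp [hn]
  · exact min_eq_left (by exact_mod_cast Nat.one_le_iff_ne_zero.2 hn)

lemma sum_mul_H_sub (t : Fin k → ℝ) (x δ : Fin k → ℕ) :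
    ∑ i, t i * H (x i - δ i) = ∑ i with δ i < x i, t i := by
  rw [sum_filter]
  refine sum_congr rfl fun i _ => ?_
  rw [H_eq_ite]
  split_ifs <;> first | omega | simp

lemma worstProfit_le {t : Fin k → ℝ} {α : ℕ} {x δ : Fin k → ℕ} (hδx : δ ≤ x)
    (hδα : ∑ i, δ i ≤ α) : worstProfit t α x ≤ ∑ i with δ i < x i, t i := by
  rw [← sum_mul_H_sub]
  exact inf'_le _ (mem_filter.2 ⟨mem_Icc.2 ⟨fun _ => Nat.zero_le _, hδx⟩, hδα⟩)

lemma le_worstProfit {t : Fin k → ℝ} {α : ℕ} {x : Fin k → ℕ} {b : ℝ}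
    (h : ∀ δ ≤ x, ∑ i, δ i ≤ α → b ≤ ∑ i with δ i < x i, t i) : b ≤ worstProfit t α x :=
  le_inf' _ _ fun δ hδ => by
    obtain ⟨hδx, hδα⟩ := mem_filter.1 hδ
    rw [sum_mul_H_sub]
    exact h δ (mem_Icc.1 hδx).2 hδα

def evenProfile (k c d m : ℕ) : Fin k → ℕ :=
  fun i => if (i : ℕ) < d then c + 1 else if (i : ℕ) < m then c else 0

theorem worstProfit_evenProfile_le {t : Fin k → ℝ} {α c d m r s : ℕ} (hc : 0 < c)
    (hrd : r ≤ d) (hdsm : d + s ≤ m) (hcost : r * (c + 1) + s * c ≤ α) :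
    worstProfit t α (evenProfile k c d m) ≤
      ∑ i ∈ finIco k r d, t i + ∑ i ∈ finIco k (d + s) m, t i := by
  let δ : Fin k → ℕ := fun i =>
    (if i ∈ finIco k 0 r then c + 1 else 0) + (if i ∈ finIco k d (d + s) then c else 0)
  have hδx : δ ≤ evenProfile k c d m := fun i => by
    simp only [δ, evenProfile, mem_finIco]
    split_ifs <;> omega
  have hδα : ∑ i, δ i ≤ α := by
    have hr : #(finIco k 0 r) ≤ r := by rw [card_finIco]; omega
    have hs : #(finIco k d (d + s)) ≤ s := by rw [card_finIco]; omega
    simp only [δ]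
    rw [sum_add_distrib, sum_ite_mem, sum_ite_mem, univ_inter, univ_inter, sum_const, sum_const,
      smul_eq_mul, smul_eq_mul]
    exact le_trans (by gcongr) hcost
  calc worstProfit t α (evenProfile k c d m) ≤ ∑ i with δ i < evenProfile k c d m i, t i :=
        worstProfit_le hδx hδα
    _ = _ := by
      rw [← sum_union (disjoint_finIco (by omega))]
      congr 1
      ext i
      simp only [δ, evenProfile, mem_filter, mem_univ, true_and, mem_union, mem_finIco]
      split_ifs <;> omega

theorem exists_le_sum_survivors_evenProfile {t : Fin k → ℝ} (ht : Antitone t) {α c d m : ℕ}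
    (hdm : d ≤ m) {δ : Fin k → ℕ} (hδα : ∑ i, δ i ≤ α) :
    ∃ r s, r ≤ d ∧ d + s ≤ m ∧ r * (c + 1) + s * c ≤ α ∧
      ∑ i ∈ finIco k r d, t i + ∑ i ∈ finIco k (d + s) m, t i ≤
        ∑ i with δ i < evenProfile k c d m i, t i := by
  set x := evenProfile k c d m
  set A := (finIco k 0 d).filter fun i => x i ≤ δ i
  set B := (finIco k d m).filter fun i => x i ≤ δ i
  have hA_sub : A ⊆ finIco k 0 d := filter_subset _ _
  have hB_sub : B ⊆ finIco k d m := filter_subset _ _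
  have hAB : Disjoint A B := (disjoint_finIco le_rfl).mono hA_sub hB_sub
  refine ⟨#A, #B, ?_, ?_, ?_, ?_⟩
  · exact (card_le_card hA_sub).trans (by rw [card_finIco]; omega)
  · have := (card_le_card hB_sub).trans_eq (card_finIco d m)
    omega
  · have hA : ∀ i ∈ A, c + 1 ≤ δ i := fun i hi => by
      simp only [A, x, evenProfile, mem_filter, mem_finIco] at hi
      rw [if_pos hi.1.2] at hi
      exact hi.2
    have hB : ∀ i ∈ B, c ≤ δ i := fun i hi => by
      simp only [B, x, evenProfile, mem_filter, mem_finIco] at hi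
      rw [if_neg (by omega), if_pos hi.1.2] at hi
      exact hi.2
    calc #A * (c + 1) + #B * c = ∑ i ∈ A, (c + 1) + ∑ i ∈ B, c := by
          simp only [sum_const, smul_eq_mul]
      _ ≤ ∑ i ∈ A, δ i + ∑ i ∈ B, δ i := add_le_add (sum_le_sum hA) (sum_le_sum hB)
      _ = ∑ i ∈ A ∪ B, δ i := (sum_union hAB).symm
      _ ≤ ∑ i, δ i := sum_le_sum_of_subset (subset_univ _)
      _ ≤ α := hδα
  · have hsurv : ({i | δ i < x i} : Finset (Fin k)) = (finIco k 0 d \ A) ∪ (finIco k d m \ B) := by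
      ext i
      simp only [A, B, x, evenProfile, mem_filter, mem_univ, true_and, mem_union, mem_sdiff,
        mem_finIco]
      split_ifs <;> omega
    rw [hsurv, sum_union ((disjoint_finIco le_rfl).mono sdiff_subset sdiff_subset)]
    refine add_le_add ?_ (sum_finIco_le_sum_sdiff ht hdm hB_sub)
    simpa only [zero_add] using sum_finIco_le_sum_sdiff ht (Nat.zero_le d) hA_sub

end

theorem even_assignment_worstProfit_general (k N α m : ℕ)
    (t : Fin k → ℝ) (ht_mono : ∀ i j : Fin k, i ≤ j → t j ≤ t i)
    (ht_nonneg : ∀ i, 0 ≤ t i)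
    (hm1 : 1 ≤ m) (hmN : m ≤ N)
    (c d : ℕ) (hc : c = N / m) (hd : d = N - c * m)
    (x : Fin k → ℕ)
    (hx : ∀ i : Fin k,
      x i = if (i : ℕ) < d then c + 1 else if (i : ℕ) < m then c else 0)
    (U : ℕ → ℝ)
    (hU : ∀ j, U j = ∑ i ∈ Finset.univ.filter (fun i : Fin k => (i : ℕ) < j), t i)
    (s : ℕ → ℕ) (hs : ∀ r, s r = min (m - d) ((α - r * (c + 1)) / c)) :
    worstProfit t α x =
      (Finset.range (min d (α / (c + 1)) + 1)).inf'
        Finset.nonempty_range_add_one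
        (fun r => (U d - U r) + (U m - U (d + s r))) := by
  have hc0 : 0 < c := hc ▸ Nat.div_pos hmN hm1
  have hdm : d ≤ m := by
    rw [hd, hc, ← Nat.mod_eq_sub_div_mul]
    exact (Nat.mod_lt N hm1).le
  have hrange : ∀ r, r ∈ range (min d (α / (c + 1)) + 1) ↔ r ≤ d ∧ r * (c + 1) ≤ α := fun r => by
    rw [mem_range, Nat.lt_succ_iff, le_min_iff, Nat.le_div_iff_mul_le (Nat.succ_pos c)]
  have hs_max : ∀ r s', s' ≤ s r ↔ s' ≤ m - d ∧ s' * c ≤ α - r * (c + 1) := fun r s' => by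
    rw [hs, le_min_iff, Nat.le_div_iff_mul_le hc0]
  have hsr : ∀ r, d + s r ≤ m := fun r => by
    have := ((hs_max r (s r)).1 le_rfl).1
    omega
  have hvalue : ∀ r ≤ d, (U d - U r) + (U m - U (d + s r)) =
      ∑ i ∈ finIco k r d, t i + ∑ i ∈ finIco k (d + s r) m, t i := fun r hrd => by
    simp only [hU]
    rw [sum_val_lt_sub_sum_val_lt t hrd, sum_val_lt_sub_sum_val_lt t (hsr r)]
  obtain rfl : x = evenProfile k c d m := funext hx
  apply le_antisymm
  · refine le_inf' _ _ fun r hr => ?_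
    obtain ⟨hrd, hr_cost⟩ := (hrange r).1 hr
    obtain ⟨-, hsr_cost⟩ := (hs_max r (s r)).1 le_rfl
    rw [hvalue r hrd]
    exact worstProfit_evenProfile_le hc0 hrd (hsr r) (by omega)
  · refine le_worstProfit fun δ _ hδα => ?_
    obtain ⟨r, s', hrd, hs'm, hcost, hle⟩ :=
      exists_le_sum_survivors_evenProfile (c := c) (fun i j hij => ht_mono i j hij) hdm hδα
    have hs' : s' ≤ s r := (hs_max r s').2 ⟨by omega, by omega⟩
    calc _ ≤ (U d - U r) + (U m - U (d + s r)) := inf'_le _ ((hrange r).2 ⟨hrd, by omega⟩)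
      _ = ∑ i ∈ finIco k r d, t i + ∑ i ∈ finIco k (d + s r) m, t i := hvalue r hrd
      _ ≤ ∑ i ∈ finIco k r d, t i + ∑ i ∈ finIco k (d + s') m, t i :=
        add_le_add le_rfl (sum_finIco_le_sum_finIco_of_le ht_nonneg (by omega))
      _ ≤ _ := hle

/-- The worst-case profit of the even assignment (all `N` agents distributed as
evenly as possible among the `m` most valuable tasks, with `c = ⌊N/m⌋` and the
extra `d = N − cm` agents given to the `d` most valuable tasks) equals the
minimum over `0 ≤ r ≤ min(d, ⌊α/(c+1)⌋)` of
`(U_d − U_r) + (U_m − U_{d+s(r)})`, where `U_j` is the `j`-th prefix sum of the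
profits and `s(r) = min(m − d, ⌊(α − r(c+1))/c⌋)`. -/
theorem even_assignment_worstProfit (k N α m : ℕ) (hα : α ≤ N)
    (t : Fin k → ℝ) (ht_mono : ∀ i j : Fin k, i ≤ j → t j ≤ t i)
    (ht_nonneg : ∀ i, 0 ≤ t i)
    (hm1 : 1 ≤ m) (hmk : m ≤ k) (hmN : m ≤ N)
    (c d : ℕ) (hc : c = N / m) (hd : d = N - c * m)
    (x : Fin k → ℕ)
    (hx : ∀ i : Fin k,
      x i = if (i : ℕ) < d then c + 1 else if (i : ℕ) < m then c else 0)
    (U : ℕ → ℝ)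
    (hU : ∀ j, U j = ∑ i ∈ Finset.univ.filter (fun i : Fin k => (i : ℕ) < j), t i)
    (s : ℕ → ℕ) (hs : ∀ r, s r = min (m - d) ((α - r * (c + 1)) / c)) :
    worstProfit t α x =
      (Finset.range (min d (α / (c + 1)) + 1)).inf'
        Finset.nonempty_range_add_one
        (fun r => (U d - U r) + (U m - U (d + s r))) :=
  even_assignment_worstProfit_general k N α m t ht_mono ht_nonneg hm1 hmN c d hc hd x hx U hU s hs
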